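/- Let ψ be a (0,2)-tensor field pure with respect to a (1,1)-tensor field φ, i.e., ψ(φX,Y) = ψ(X,φY) for all vector fields X, Y. Then the map (X,Y,Z) ↦ (L_{φ(X)}ψ − L_X(ψ∘₁φ))(Y,Z) is a (0,3)-tensor field (C^∞-linear in each of X, Y, Z). -/

import Mathlib

open scoped BigOperators

noncomputable section

/-- Points of the model space `ℝ^m`. -/
abbrev Pt (m : ℕ) := Fin m → ℝ
/-- Vector fields (or 1-forms) on `ℝ^m`, given by their components. -/
abbrev VF (m : ℕ) := Pt m → Fin m → ℝ
/-- (0,2)-tensor fields (or (1,1)-tensor fields) on `ℝ^m`, given by components. -/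
abbrev T02 (m : ℕ) := Pt m → Fin m → Fin m → ℝ
/-- (0,3)- or (1,2)-tensor fields on `ℝ^m`, given by components. -/
abbrev T3 (m : ℕ) := Pt m → Fin m → Fin m → Fin m → ℝ

variable {m : ℕ}

/-- `i`-th partial derivative of a scalar function. -/
def pd (i : Fin m) (f : Pt m → ℝ) (x : Pt m) : ℝ :=
  fderiv ℝ f x (Pi.single i 1)

/-- Derivative of a function `f` along a vector field `X`. -/
def Xdot (X : VF m) (f : Pt m → ℝ) (x : Pt m) : ℝ :=
  ∑ k, X x k * pd k f x

/-- Lie bracket of vector fields, in components. -/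
def lieB (X Y : VF m) : VF m := fun x i =>
  ∑ k, (X x k * pd k (fun y => Y y i) x - Y x k * pd k (fun y => X y i) x)

/-- Evaluation `ψ(X)` of a 1-form on a vector field. -/
def ev1 (ψ X : VF m) (x : Pt m) : ℝ := ∑ i, ψ x i * X x i

/-- Exterior derivative of a function, as a 1-form. -/
def dF (f : Pt m → ℝ) : VF m := fun x i => pd i f x

/-- Exterior derivative of a 1-form, as a 2-form: `(dψ)_{ij} = ∂_i ψ_j - ∂_j ψ_i`. -/
def d2 (ψ : VF m) : T02 m := fun x i j =>
  pd i (fun y => ψ y j) x - pd j (fun y => ψ y i) x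

/-- Evaluation of a (0,2)-tensor field on two vector fields. -/
def ev2 (T : T02 m) (X Y : VF m) (x : Pt m) : ℝ :=
  ∑ i, ∑ j, T x i j * X x i * Y x j

/-- Lie derivative of a 1-form `ψ` along `X`, evaluated on `Y`:
`(L_X ψ)(Y) = X·(ψ(Y)) - ψ([X,Y])`. -/
def lie1 (X ψ Y : VF m) (x : Pt m) : ℝ :=
  Xdot X (ev1 ψ Y) x - ev1 ψ (lieB X Y) x

/-- Lie derivative of a (0,2)-tensor field `T` along `X`, evaluated on `Y, Z`:
`(L_X T)(Y,Z) = X·T(Y,Z) - T([X,Y],Z) - T(Y,[X,Z])`. -/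
def lie2 (X : VF m) (T : T02 m) (Y Z : VF m) (x : Pt m) : ℝ :=
  Xdot X (ev2 T Y Z) x - ev2 T (lieB X Y) Z x - ev2 T Y (lieB X Z) x

/-- Application of a (1,1)-tensor field to a vector field: `(φX)^i = φ^i_j X^j`. -/
def appT (φ : T02 m) (X : VF m) : VF m := fun x i => ∑ j, φ x i j * X x j

/-- `(ψ∘₁φ)(X,Y) = ψ(φX,Y)`, in components `(ψ∘₁φ)_{ij} = ψ_{aj} φ^a_i`. -/
def comp1 (ψ φ : T02 m) : T02 m := fun x i j => ∑ a, ψ x a j * φ x a i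

/-- `(ψ∘₂φ)(X,Y) = ψ(X,φY)`, in components `(ψ∘₂φ)_{ij} = ψ_{ia} φ^a_j`. -/
def comp2 (ψ φ : T02 m) : T02 m := fun x i j => ∑ a, ψ x i a * φ x a j

/-- Composition `ψ∘φ` of a 1-form with a (1,1)-tensor field:  `(ψ∘φ)_i = ψ_a φ^a_i`. -/
def compF (ψ : VF m) (φ : T02 m) : VF m := fun x i => ∑ a, ψ x a * φ x a i

/-- Exterior derivative of a 2-form `T`, as a 3-form:
`(dT)_{ijk} = ∂_i T_{jk} - ∂_j T_{ik} + ∂_k T_{ij}`. -/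
def d3 (T : T02 m) : T3 m := fun x i j k =>
  pd i (fun y => T y j k) x - pd j (fun y => T y i k) x + pd k (fun y => T y i j) x

/-- Evaluation of a (0,3)-tensor field on three vector fields. -/
def ev3 (U : T3 m) (X Y Z : VF m) (x : Pt m) : ℝ :=
  ∑ i, ∑ j, ∑ k, U x i j k * X x i * Y x j * Z x k

/-- Pointwise sum of vector fields. -/
def addV (X Y : VF m) : VF m := fun x i => X x i + Y x i

/-- Pointwise multiplication of a vector field by a function. -/
def smulV (f : Pt m → ℝ) (X : VF m) : VF m := fun x i => f x * X x i

/-!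
In coordinates `X·g = dg(X)` and `[X,Y] = DY(X) - DX(Y)`, so `L_X T` is `C^∞`-linear in the
slots `Y, Z` (the derivative of `f` produced by `X·(f T(Y,Z))` cancels the one in `[X, fY]`),
additive in `X`, and `L_{fX}T (Y,Z) = f L_X T (Y,Z) + (Y·f) T(X,Z) + (Z·f) T(Y,X)`.
For `L_{φ(fX)}ψ - L_{fX}(ψ∘₁φ)` the extra terms are `(Y·f) ψ(φX,Z) + (Z·f) ψ(Y,φX)` and
`(Y·f) ψ(φX,Z) + (Z·f) ψ(φY,X)`, which agree because `ψ` is pure with respect to `φ`.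
-/

open Matrix

theorem Xdot_eq_fderiv (X : VF m) (g : Pt m → ℝ) (x : Pt m) :
    Xdot X g x = fderiv ℝ g x (X x) := by
  conv_rhs => rw [pi_eq_sum_univ' (X x)]
  simp [Xdot, pd]

theorem lieB_eq_fderiv {X Y : VF m} {x : Pt m} (hX : DifferentiableAt ℝ X x)
    (hY : DifferentiableAt ℝ Y x) :
    lieB X Y x = fderiv ℝ Y x (X x) - fderiv ℝ X x (Y x) := by
  have hcomponent {V : VF m} (hV : DifferentiableAt ℝ V x) (W : VF m) (i : Fin m) :
      ∑ k, W x k * pd k (fun y => V y i) x = fderiv ℝ V x (W x) i := by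
    rw [← Xdot, Xdot_eq_fderiv, fderiv_apply hV]
    rfl
  ext i
  simp only [lieB, Finset.sum_sub_distrib, hcomponent hX, hcomponent hY, Pi.sub_apply]

theorem ev2_eq_dotProduct (T : T02 m) (X Y : VF m) (x : Pt m) :
    ev2 T X Y x = X x ⬝ᵥ (of (T x) *ᵥ Y x) := by
  simp only [ev2, dotProduct, mulVec, of_apply, Finset.mul_sum]
  exact Finset.sum_congr rfl fun i _ => Finset.sum_congr rfl fun j _ => by ring

theorem appT_apply (φ : T02 m) (X : VF m) (x : Pt m) : appT φ X x = of (φ x) *ᵥ X x := rfl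

theorem of_comp1 (ψ φ : T02 m) (x : Pt m) : of (comp1 ψ φ x) = (of (φ x))ᵀ * of (ψ x) := by
  ext i j
  simp only [comp1, mul_apply, transpose_apply, of_apply, mul_comm]

theorem ev2_comp1 (ψ φ : T02 m) (X Z : VF m) (x : Pt m) :
    ev2 (comp1 ψ φ) X Z x = ev2 ψ (appT φ X) Z x := by
  rw [ev2_eq_dotProduct, ev2_eq_dotProduct, of_comp1, appT_apply, ← mulVec_mulVec,
    dotProduct_mulVec, vecMul_transpose]

theorem addV_eq_add (X Y : VF m) : addV X Y = X + Y := rfl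

theorem smulV_eq_smul (f : Pt m → ℝ) (X : VF m) : smulV f X = fun x => f x • X x := rfl

theorem differentiableAt_entry {T : T02 m} {x : Pt m} (hT : DifferentiableAt ℝ T x)
    (i j : Fin m) : DifferentiableAt ℝ (fun y => T y i j) x :=
  differentiableAt_pi.1 (differentiableAt_pi.1 hT i) j

theorem differentiableAt_ev2 {T : T02 m} {X Y : VF m} {x : Pt m} (hT : DifferentiableAt ℝ T x)
    (hX : DifferentiableAt ℝ X x) (hY : DifferentiableAt ℝ Y x) :
    DifferentiableAt ℝ (ev2 T X Y) x := by
  have hX' := differentiableAt_pi.1 hX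
  have hY' := differentiableAt_pi.1 hY
  exact DifferentiableAt.fun_sum fun i _ => DifferentiableAt.fun_sum fun j _ =>
    ((differentiableAt_entry hT i j).mul (hX' i)).mul (hY' j)

theorem differentiableAt_appT {φ : T02 m} {X : VF m} {x : Pt m} (hφ : DifferentiableAt ℝ φ x)
    (hX : DifferentiableAt ℝ X x) : DifferentiableAt ℝ (appT φ X) x := by
  have hX' := differentiableAt_pi.1 hX
  exact differentiableAt_pi.2 fun i => DifferentiableAt.fun_sum fun j _ =>
    (differentiableAt_entry hφ i j).mul (hX' j)

theorem differentiableAt_comp1 {ψ φ : T02 m} {x : Pt m} (hψ : DifferentiableAt ℝ ψ x)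
    (hφ : DifferentiableAt ℝ φ x) : DifferentiableAt ℝ (comp1 ψ φ) x :=
  differentiableAt_pi.2 fun i => differentiableAt_pi.2 fun j =>
    DifferentiableAt.fun_sum fun a _ =>
      (differentiableAt_entry hψ a j).mul (differentiableAt_entry hφ a i)

theorem appT_addV (φ : T02 m) (X X' : VF m) :
    appT φ (addV X X') = addV (appT φ X) (appT φ X') := by
  ext x
  simp only [appT_apply, addV_eq_add, Pi.add_apply, mulVec_add]

theorem appT_smulV (φ : T02 m) (f : Pt m → ℝ) (X : VF m) :
    appT φ (smulV f X) = smulV f (appT φ X) := by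
  ext x
  simp only [appT_apply, smulV_eq_smul, mulVec_smul]

section LieBracket

variable {X X' Y Y' : VF m} {f : Pt m → ℝ} {x : Pt m}

theorem lieB_addV_left (hX : DifferentiableAt ℝ X x) (hX' : DifferentiableAt ℝ X' x)
    (hY : DifferentiableAt ℝ Y x) : lieB (addV X X') Y x = lieB X Y x + lieB X' Y x := by
  rw [lieB_eq_fderiv hX hY, lieB_eq_fderiv hX' hY, addV_eq_add, lieB_eq_fderiv (hX.add hX') hY,
    fderiv_add hX hX']
  simp only [Pi.add_apply, map_add, _root_.add_apply]
  abel

theorem lieB_addV_right (hX : DifferentiableAt ℝ X x) (hY : DifferentiableAt ℝ Y x)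
    (hY' : DifferentiableAt ℝ Y' x) : lieB X (addV Y Y') x = lieB X Y x + lieB X Y' x := by
  rw [lieB_eq_fderiv hX hY, lieB_eq_fderiv hX hY', addV_eq_add, lieB_eq_fderiv hX (hY.add hY'),
    fderiv_add hY hY']
  simp only [Pi.add_apply, map_add, _root_.add_apply]
  abel

theorem lieB_smulV_left (hf : DifferentiableAt ℝ f x) (hX : DifferentiableAt ℝ X x)
    (hY : DifferentiableAt ℝ Y x) :
    lieB (smulV f X) Y x = f x • lieB X Y x - Xdot Y f x • X x := by
  rw [lieB_eq_fderiv hX hY, smulV_eq_smul, lieB_eq_fderiv (hf.fun_smul hX) hY,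
    fderiv_fun_smul hf hX, Xdot_eq_fderiv]
  simp only [map_smul, _root_.add_apply, _root_.smul_apply, ContinuousLinearMap.smulRight_apply,
    smul_sub]
  abel

theorem lieB_smulV_right (hf : DifferentiableAt ℝ f x) (hX : DifferentiableAt ℝ X x)
    (hY : DifferentiableAt ℝ Y x) :
    lieB X (smulV f Y) x = f x • lieB X Y x + Xdot X f x • Y x := by
  rw [lieB_eq_fderiv hX hY, smulV_eq_smul, lieB_eq_fderiv hX (hf.fun_smul hY),
    fderiv_fun_smul hf hY, Xdot_eq_fderiv]
  simp only [map_smul, _root_.add_apply, _root_.smul_apply, ContinuousLinearMap.smulRight_apply,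
    smul_sub]
  abel

end LieBracket

section Evaluation

variable {T : T02 m} {f : Pt m → ℝ} {X Y Y' Z Z' : VF m}

theorem ev2_addV_left : ev2 T (addV Y Y') Z = ev2 T Y Z + ev2 T Y' Z := by
  ext x
  simp only [ev2_eq_dotProduct, addV_eq_add, Pi.add_apply, add_dotProduct]

theorem ev2_addV_right : ev2 T Y (addV Z Z') = ev2 T Y Z + ev2 T Y Z' := by
  ext x
  simp only [ev2_eq_dotProduct, addV_eq_add, Pi.add_apply, mulVec_add, dotProduct_add]

theorem ev2_smulV_left : ev2 T (smulV f Y) Z = f * ev2 T Y Z := by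
  ext x
  simp only [ev2_eq_dotProduct, smulV_eq_smul, Pi.mul_apply, smul_dotProduct, smul_eq_mul]

theorem ev2_smulV_right : ev2 T Y (smulV f Z) = f * ev2 T Y Z := by
  ext x
  simp only [ev2_eq_dotProduct, smulV_eq_smul, Pi.mul_apply, mulVec_smul, dotProduct_smul,
    smul_eq_mul]

end Evaluation

section LieDerivative

variable {T : T02 m} {f : Pt m → ℝ} {X X' Y Y' Z Z' : VF m} {x : Pt m}

theorem lie2_addV_left (hX : DifferentiableAt ℝ X x) (hX' : DifferentiableAt ℝ X' x)
    (hY : DifferentiableAt ℝ Y x) (hZ : DifferentiableAt ℝ Z x) :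
    lie2 (addV X X') T Y Z x = lie2 X T Y Z x + lie2 X' T Y Z x := by
  simp only [lie2, ev2_eq_dotProduct]
  rw [lieB_addV_left hX hX' hY, lieB_addV_left hX hX' hZ]
  simp only [Xdot_eq_fderiv, addV_eq_add, Pi.add_apply, map_add, add_dotProduct, mulVec_add,
    dotProduct_add]
  ring

theorem lie2_smulV_left (hf : DifferentiableAt ℝ f x) (hX : DifferentiableAt ℝ X x)
    (hY : DifferentiableAt ℝ Y x) (hZ : DifferentiableAt ℝ Z x) :
    lie2 (smulV f X) T Y Z x =
      f x * lie2 X T Y Z x + Xdot Y f x * ev2 T X Z x + Xdot Z f x * ev2 T Y X x := by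
  simp only [lie2, ev2_eq_dotProduct]
  rw [lieB_smulV_left hf hX hY, lieB_smulV_left hf hX hZ]
  simp only [Xdot_eq_fderiv, smulV_eq_smul, map_smul, smul_eq_mul, sub_dotProduct,
    smul_dotProduct, mulVec_sub, mulVec_smul, dotProduct_sub, dotProduct_smul]
  ring

theorem lie2_addV_middle (hT : DifferentiableAt ℝ T x) (hX : DifferentiableAt ℝ X x)
    (hY : DifferentiableAt ℝ Y x) (hY' : DifferentiableAt ℝ Y' x) (hZ : DifferentiableAt ℝ Z x) :
    lie2 X T (addV Y Y') Z x = lie2 X T Y Z x + lie2 X T Y' Z x := by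
  simp only [lie2, Xdot_eq_fderiv, ev2_eq_dotProduct, ev2_addV_left]
  rw [lieB_addV_right hX hY hY',
    fderiv_add (differentiableAt_ev2 hT hY hZ) (differentiableAt_ev2 hT hY' hZ)]
  simp only [addV_eq_add, Pi.add_apply, _root_.add_apply, add_dotProduct]
  ring

theorem lie2_smulV_middle (hT : DifferentiableAt ℝ T x) (hf : DifferentiableAt ℝ f x)
    (hX : DifferentiableAt ℝ X x) (hY : DifferentiableAt ℝ Y x) (hZ : DifferentiableAt ℝ Z x) :
    lie2 X T (smulV f Y) Z x = f x * lie2 X T Y Z x := by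
  simp only [lie2, Xdot_eq_fderiv, ev2_eq_dotProduct, ev2_smulV_left]
  rw [lieB_smulV_right hf hX hY, fderiv_mul hf (differentiableAt_ev2 hT hY hZ)]
  simp only [Xdot_eq_fderiv, ev2_eq_dotProduct, smulV_eq_smul, _root_.add_apply,
    _root_.smul_apply, smul_eq_mul, add_dotProduct, smul_dotProduct]
  ring

theorem lie2_addV_right (hT : DifferentiableAt ℝ T x) (hX : DifferentiableAt ℝ X x)
    (hY : DifferentiableAt ℝ Y x) (hZ : DifferentiableAt ℝ Z x) (hZ' : DifferentiableAt ℝ Z' x) :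
    lie2 X T Y (addV Z Z') x = lie2 X T Y Z x + lie2 X T Y Z' x := by
  simp only [lie2, Xdot_eq_fderiv, ev2_eq_dotProduct, ev2_addV_right]
  rw [lieB_addV_right hX hZ hZ',
    fderiv_add (differentiableAt_ev2 hT hY hZ) (differentiableAt_ev2 hT hY hZ')]
  simp only [addV_eq_add, Pi.add_apply, _root_.add_apply, mulVec_add, dotProduct_add]
  ring

theorem lie2_smulV_right (hT : DifferentiableAt ℝ T x) (hf : DifferentiableAt ℝ f x)
    (hX : DifferentiableAt ℝ X x) (hY : DifferentiableAt ℝ Y x) (hZ : DifferentiableAt ℝ Z x) :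
    lie2 X T Y (smulV f Z) x = f x * lie2 X T Y Z x := by
  simp only [lie2, Xdot_eq_fderiv, ev2_eq_dotProduct, ev2_smulV_right]
  rw [lieB_smulV_right hf hX hZ, fderiv_mul hf (differentiableAt_ev2 hT hY hZ)]
  simp only [Xdot_eq_fderiv, ev2_eq_dotProduct, smulV_eq_smul, _root_.add_apply,
    _root_.smul_apply, smul_eq_mul, mulVec_add, mulVec_smul, dotProduct_add, dotProduct_smul]
  ring

end LieDerivative

def yanoAko (φ ψ : T02 m) (X Y Z : VF m) (x : Pt m) : ℝ :=
  lie2 (appT φ X) ψ Y Z x - lie2 X (comp1 ψ φ) Y Z x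

section YanoAko

variable {φ ψ : T02 m} {f : Pt m → ℝ} {X X' Y Y' Z Z' : VF m} {x : Pt m}

theorem yanoAko_addV_left (hφ : DifferentiableAt ℝ φ x) (hX : DifferentiableAt ℝ X x)
    (hX' : DifferentiableAt ℝ X' x) (hY : DifferentiableAt ℝ Y x) (hZ : DifferentiableAt ℝ Z x) :
    yanoAko φ ψ (addV X X') Y Z x = yanoAko φ ψ X Y Z x + yanoAko φ ψ X' Y Z x := by
  rw [yanoAko, yanoAko, yanoAko, appT_addV,
    lie2_addV_left (differentiableAt_appT hφ hX) (differentiableAt_appT hφ hX') hY hZ,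
    lie2_addV_left hX hX' hY hZ]
  ring

theorem yanoAko_smulV_left (hpure : ∀ X Y : VF m, ev2 ψ (appT φ X) Y x = ev2 ψ X (appT φ Y) x)
    (hφ : DifferentiableAt ℝ φ x) (hf : DifferentiableAt ℝ f x) (hX : DifferentiableAt ℝ X x)
    (hY : DifferentiableAt ℝ Y x) (hZ : DifferentiableAt ℝ Z x) :
    yanoAko φ ψ (smulV f X) Y Z x = f x * yanoAko φ ψ X Y Z x := by
  rw [yanoAko, yanoAko, appT_smulV, lie2_smulV_left hf (differentiableAt_appT hφ hX) hY hZ,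
    lie2_smulV_left hf hX hY hZ, ev2_comp1, ev2_comp1, hpure Y X]
  ring

theorem yanoAko_addV_middle (hφ : DifferentiableAt ℝ φ x) (hψ : DifferentiableAt ℝ ψ x)
    (hX : DifferentiableAt ℝ X x) (hY : DifferentiableAt ℝ Y x) (hY' : DifferentiableAt ℝ Y' x)
    (hZ : DifferentiableAt ℝ Z x) :
    yanoAko φ ψ X (addV Y Y') Z x = yanoAko φ ψ X Y Z x + yanoAko φ ψ X Y' Z x := by
  rw [yanoAko, yanoAko, yanoAko, lie2_addV_middle hψ (differentiableAt_appT hφ hX) hY hY' hZ,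
    lie2_addV_middle (differentiableAt_comp1 hψ hφ) hX hY hY' hZ]
  ring

theorem yanoAko_smulV_middle (hφ : DifferentiableAt ℝ φ x) (hψ : DifferentiableAt ℝ ψ x)
    (hf : DifferentiableAt ℝ f x) (hX : DifferentiableAt ℝ X x) (hY : DifferentiableAt ℝ Y x)
    (hZ : DifferentiableAt ℝ Z x) :
    yanoAko φ ψ X (smulV f Y) Z x = f x * yanoAko φ ψ X Y Z x := by
  rw [yanoAko, yanoAko, lie2_smulV_middle hψ hf (differentiableAt_appT hφ hX) hY hZ,
    lie2_smulV_middle (differentiableAt_comp1 hψ hφ) hf hX hY hZ]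
  ring

theorem yanoAko_addV_right (hφ : DifferentiableAt ℝ φ x) (hψ : DifferentiableAt ℝ ψ x)
    (hX : DifferentiableAt ℝ X x) (hY : DifferentiableAt ℝ Y x) (hZ : DifferentiableAt ℝ Z x)
    (hZ' : DifferentiableAt ℝ Z' x) :
    yanoAko φ ψ X Y (addV Z Z') x = yanoAko φ ψ X Y Z x + yanoAko φ ψ X Y Z' x := by
  rw [yanoAko, yanoAko, yanoAko, lie2_addV_right hψ (differentiableAt_appT hφ hX) hY hZ hZ',
    lie2_addV_right (differentiableAt_comp1 hψ hφ) hX hY hZ hZ']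
  ring

theorem yanoAko_smulV_right (hφ : DifferentiableAt ℝ φ x) (hψ : DifferentiableAt ℝ ψ x)
    (hf : DifferentiableAt ℝ f x) (hX : DifferentiableAt ℝ X x) (hY : DifferentiableAt ℝ Y x)
    (hZ : DifferentiableAt ℝ Z x) :
    yanoAko φ ψ X Y (smulV f Z) x = f x * yanoAko φ ψ X Y Z x := by
  rw [yanoAko, yanoAko, lie2_smulV_right hψ hf (differentiableAt_appT hφ hX) hY hZ,
    lie2_smulV_right (differentiableAt_comp1 hψ hφ) hf hX hY hZ]
  ring

end YanoAko

/-- Theorem 3.3 (Yano–Ako): if the (0,2)-tensor field `ψ` is pure with respect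
to the (1,1)-tensor field `φ`, i.e. `ψ(φX,Y) = ψ(X,φY)` for all vector fields
`X, Y`, then `(X,Y,Z) ↦ (L_{φ(X)}ψ − L_X(ψ∘₁φ))(Y,Z)` is a (0,3)-tensor
field, i.e. `C^∞`-linear in each of `X, Y, Z`. -/
theorem stmt15 (m : ℕ) (φ ψ : T02 m)
    (hφ : ContDiff ℝ (⊤ : ℕ∞) φ) (hψ : ContDiff ℝ (⊤ : ℕ∞) ψ)
    (hpure : ∀ X Y : VF m, ∀ x : Pt m,
      ev2 ψ (appT φ X) Y x = ev2 ψ X (appT φ Y) x) :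
    ∀ (f : Pt m → ℝ), ContDiff ℝ (⊤ : ℕ∞) f →
    ∀ (X X' Y Z : VF m), ContDiff ℝ (⊤ : ℕ∞) X → ContDiff ℝ (⊤ : ℕ∞) X' →
      ContDiff ℝ (⊤ : ℕ∞) Y → ContDiff ℝ (⊤ : ℕ∞) Z →
    ∀ x : Pt m,
      (lie2 (appT φ (addV X X')) ψ Y Z x - lie2 (addV X X') (comp1 ψ φ) Y Z x
        = (lie2 (appT φ X) ψ Y Z x - lie2 X (comp1 ψ φ) Y Z x)
          + (lie2 (appT φ X') ψ Y Z x - lie2 X' (comp1 ψ φ) Y Z x)) ∧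
      (lie2 (appT φ (smulV f X)) ψ Y Z x - lie2 (smulV f X) (comp1 ψ φ) Y Z x
        = f x * (lie2 (appT φ X) ψ Y Z x - lie2 X (comp1 ψ φ) Y Z x)) ∧
      (lie2 (appT φ X) ψ (addV Y X') Z x - lie2 X (comp1 ψ φ) (addV Y X') Z x
        = (lie2 (appT φ X) ψ Y Z x - lie2 X (comp1 ψ φ) Y Z x)
          + (lie2 (appT φ X) ψ X' Z x - lie2 X (comp1 ψ φ) X' Z x)) ∧
      (lie2 (appT φ X) ψ (smulV f Y) Z x - lie2 X (comp1 ψ φ) (smulV f Y) Z x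
        = f x * (lie2 (appT φ X) ψ Y Z x - lie2 X (comp1 ψ φ) Y Z x)) ∧
      (lie2 (appT φ X) ψ Y (addV Z X') x - lie2 X (comp1 ψ φ) Y (addV Z X') x
        = (lie2 (appT φ X) ψ Y Z x - lie2 X (comp1 ψ φ) Y Z x)
          + (lie2 (appT φ X) ψ Y X' x - lie2 X (comp1 ψ φ) Y X' x)) ∧
      (lie2 (appT φ X) ψ Y (smulV f Z) x - lie2 X (comp1 ψ φ) Y (smulV f Z) x
        = f x * (lie2 (appT φ X) ψ Y Z x - lie2 X (comp1 ψ φ) Y Z x)) := by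
  intro f hf X X' Y Z hX hX' hY hZ x
  have hdiff {E : Type} [NormedAddCommGroup E] [NormedSpace ℝ E] {F : Pt m → E}
      (hF : ContDiff ℝ (⊤ : ℕ∞) F) : DifferentiableAt ℝ F x :=
    hF.differentiable (by simp) x
  have hpure_x (X Y : VF m) := hpure X Y x
  exact ⟨yanoAko_addV_left (hdiff hφ) (hdiff hX) (hdiff hX') (hdiff hY) (hdiff hZ),
    yanoAko_smulV_left hpure_x (hdiff hφ) (hdiff hf) (hdiff hX) (hdiff hY) (hdiff hZ),
    yanoAko_addV_middle (hdiff hφ) (hdiff hψ) (hdiff hX) (hdiff hY) (hdiff hX') (hdiff hZ),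
    yanoAko_smulV_middle (hdiff hφ) (hdiff hψ) (hdiff hf) (hdiff hX) (hdiff hY) (hdiff hZ),
    yanoAko_addV_right (hdiff hφ) (hdiff hψ) (hdiff hX) (hdiff hY) (hdiff hZ) (hdiff hX'),
    yanoAko_smulV_right (hdiff hφ) (hdiff hψ) (hdiff hf) (hdiff hX) (hdiff hY) (hdiff hZ)⟩
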